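/- Let G be a σ-compact locally compact abelian group, χ a nontrivial character, y ∈ G with χ(y) ≠ 1, and (A_n) a van Hove sequence. Then |∫_{(−y)+A_n} χ dθ_G − ∫_{A_n} χ dθ_G| ≤ θ_G(∂^{{−y}} A_n), and consequently |1 − χ(y)| · |(1/θ_G(A_n)) ∫_{A_n} χ dθ_G| → 0 as n → ∞. -/

import Mathlib

/-!
Translation by `-y` multiplies the integral of `χ` over a set by `χ (-y)`, so the difference of
the two integrals is `(χ (-y) - 1) ∫_{A_n} χ`, of norm `|1 - χ y| · |∫_{A_n} χ|`. On the other hand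
the two integrals differ only on the symmetric difference of `-y + A_n` and `A_n` (up to
closures, which Haar measure does not see on compact sets), where `|χ| = 1`; that symmetric
difference lies in `∂^{{-y}} A_n`. Dividing by `θ_G(A_n)`, the van Hove property finishes.
-/

open MeasureTheory Filter
open scoped Pointwise ENNReal

/-- The (generalised) van Hove boundary `∂^U W`. -/
def vhBoundary {G : Type*} [AddGroup G] [TopologicalSpace G] (U W : Set G) : Set G :=
  ((U + closure W) ∩ closure Wᶜ) ∪ ((U + closure Wᶜ) ∩ closure W)

/-- A van Hove sequence of compact sets of positive finite Haar measure. -/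
def IsVanHove {G : Type*} [AddGroup G] [TopologicalSpace G] [MeasurableSpace G]
    (θ : Measure G) (A : ℕ → Set G) : Prop :=
  (∀ n, IsCompact (A n)) ∧ (∀ n, 0 < θ (A n)) ∧ (∀ n, θ (A n) < ⊤) ∧
    ∀ K : Set G, IsCompact K →
      Tendsto (fun n => θ (vhBoundary K (A n)) / θ (A n)) atTop (nhds 0)

open Set
open scoped symmDiff Topology

theorem norm_setIntegral_sub_setIntegral_le {α E : Type*} [MeasurableSpace α]
    [NormedAddCommGroup E] [NormedSpace ℝ E] {μ : Measure α} {f : α → E} {s t : Set α} {C : ℝ}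
    (hs : MeasurableSet s) (ht : MeasurableSet t) (hfs : IntegrableOn f s μ)
    (hft : IntegrableOn f t μ) (hst : μ (s ∆ t) ≠ ∞) (hC : ∀ x ∈ s ∆ t, ‖f x‖ ≤ C) :
    ‖∫ x in s, f x ∂μ - ∫ x in t, f x ∂μ‖ ≤ C * (μ (s ∆ t)).toReal := by
  have hsub_st : s \ t ⊆ s ∆ t := subset_union_left
  have hsub_ts : t \ s ⊆ s ∆ t := subset_union_right
  have hfin_st : μ (s \ t) ≠ ∞ := ne_top_of_le_ne_top hst (measure_mono hsub_st)
  have hfin_ts : μ (t \ s) ≠ ∞ := ne_top_of_le_ne_top hst (measure_mono hsub_ts)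
  have hsplit : ∫ x in s, f x ∂μ - ∫ x in t, f x ∂μ =
      ∫ x in s \ t, f x ∂μ - ∫ x in t \ s, f x ∂μ := by
    rw [← sdiff_self_inter, ← sdiff_self_inter (s := t), inter_comm t,
      setIntegral_sdiff (hs.inter ht) hfs inter_subset_left,
      setIntegral_sdiff (hs.inter ht) hft inter_subset_right]
    abel
  calc ‖∫ x in s, f x ∂μ - ∫ x in t, f x ∂μ‖
      ≤ ‖∫ x in s \ t, f x ∂μ‖ + ‖∫ x in t \ s, f x ∂μ‖ := hsplit ▸ norm_sub_le _ _
    _ ≤ C * (μ (s \ t)).toReal + C * (μ (t \ s)).toReal := by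
        gcongr
        · exact norm_setIntegral_le_of_norm_le_const hfin_st.lt_top fun x hx ↦ hC x (hsub_st hx)
        · exact norm_setIntegral_le_of_norm_le_const hfin_ts.lt_top fun x hx ↦ hC x (hsub_ts hx)
    _ = C * (μ (s ∆ t)).toReal := by
        rw [Set.symmDiff_def, measure_union disjoint_sdiff_sdiff (ht.diff hs),
          ENNReal.toReal_add hfin_st hfin_ts, mul_add]

theorem MeasureTheory.Measure.restrict_closure_eq_of_isCompact {α : Type*} [TopologicalSpace α] [R1Space α]
    [MeasurableSpace α] [BorelSpace α] (μ : Measure α) {K : Set α} (hK : IsCompact K)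
    (hμK : μ K ≠ ∞) : μ.restrict (closure K) = μ.restrict K :=
  le_antisymm
    (calc μ.restrict (closure K) ≤ μ.restrict (toMeasurable μ K) :=
          Measure.restrict_mono_set μ <| hK.closure_subset_measurableSet
            (measurableSet_toMeasurable μ K) (subset_toMeasurable μ K)
      _ = μ.restrict K := Measure.restrict_toMeasurable hμK)
    (Measure.restrict_mono_set μ subset_closure)

section Boundary

variable {G : Type*} [AddGroup G]

theorem singleton_add_eq_vadd (g : G) (V : Set G) : ({g} : Set G) + V = g +ᵥ V :=
  singleton_add.trans (image_vadd (a := g))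

variable [TopologicalSpace G]

theorem vadd_closure_symmDiff_closure_subset_vhBoundary (g : G) (W : Set G) :
    (g +ᵥ closure W) ∆ closure W ⊆ vhBoundary {g} W := by
  rw [vhBoundary, singleton_add_eq_vadd, singleton_add_eq_vadd]
  rintro x (⟨hx, hxW⟩ | ⟨hx, hxW⟩)
  · exact Or.inl ⟨hx, subset_closure fun h ↦ hxW (subset_closure h)⟩
  · refine Or.inr ⟨?_, hx⟩
    rw [mem_vadd_set_iff_neg_vadd_mem] at hxW ⊢
    exact subset_closure fun h ↦ hxW (subset_closure h)

theorem vhBoundary_singleton_subset (g : G) (W : Set G) :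
    vhBoundary {g} W ⊆ (g +ᵥ closure W) ∪ closure W := by
  rw [vhBoundary, singleton_add_eq_vadd]
  exact union_subset_union inter_subset_left inter_subset_right

end Boundary

theorem norm_setIntegral_vadd_sub_setIntegral_le {G E : Type*} [AddGroup G] [TopologicalSpace G]
    [IsTopologicalAddGroup G] [MeasurableSpace G] [BorelSpace G] [NormedAddCommGroup E]
    [NormedSpace ℝ E] (μ : Measure G) [IsFiniteMeasureOnCompacts μ] {f : G → E}
    (hf : Continuous f) {C : ℝ} (hC : ∀ x, ‖f x‖ ≤ C) (g : G) {s : Set G} (hs : IsCompact s) :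
    ‖∫ x in g +ᵥ s, f x ∂μ - ∫ x in s, f x ∂μ‖ ≤ C * (μ (vhBoundary {g} s)).toReal := by
  have hgs : IsCompact (g +ᵥ s) := hs.vadd g
  have hcl : IsCompact (closure s) := hs.closure
  have hgcl : IsCompact (g +ᵥ closure s) := hcl.vadd g
  have hbd_fin : μ (vhBoundary {g} s) ≠ ∞ :=
    ne_top_of_le_ne_top (hgcl.union hcl).measure_lt_top.ne
      (measure_mono (vhBoundary_singleton_subset g s))
  rw [← Measure.restrict_closure_eq_of_isCompact μ hs hs.measure_lt_top.ne,
    ← Measure.restrict_closure_eq_of_isCompact μ hgs hgs.measure_lt_top.ne, closure_vadd]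
  calc _ ≤ C * (μ ((g +ᵥ closure s) ∆ closure s)).toReal :=
        norm_setIntegral_sub_setIntegral_le (isClosed_closure.vadd g).measurableSet
          isClosed_closure.measurableSet
          (hf.continuousOn.integrableOn_compact' hgcl (isClosed_closure.vadd g).measurableSet)
          (hf.continuousOn.integrableOn_compact' hcl isClosed_closure.measurableSet)
          (ne_top_of_le_ne_top hbd_fin
            (measure_mono (vadd_closure_symmDiff_closure_subset_vhBoundary g s)))
          fun x _ ↦ hC x
    _ ≤ C * (μ (vhBoundary {g} s)).toReal := by
        gcongr
        · exact (norm_nonneg _).trans (hC 0)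
        · exact vadd_closure_symmDiff_closure_subset_vhBoundary g s

theorem setIntegral_vadd {G E : Type*} [AddGroup G] [MeasurableSpace G] [MeasurableAdd G]
    [NormedAddCommGroup E] [NormedSpace ℝ E] (μ : Measure G) [μ.IsAddLeftInvariant]
    (f : G → E) (g : G) (s : Set G) :
    ∫ x in g +ᵥ s, f x ∂μ = ∫ x in s, f (g + x) ∂μ := by
  rw [← image_vadd]
  exact (measurePreserving_add_left μ g).setIntegral_image_emb
    (MeasurableEquiv.addLeft g).measurableEmbedding f s

theorem norm_map_neg_sub_one {G : Type*} [AddGroup G] {χ : G → ℂ}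
    (hχm : ∀ x y, χ (x + y) = χ x * χ y) (hχu : ∀ x, ‖χ x‖ = 1) (y : G) :
    ‖χ (-y) - 1‖ = ‖1 - χ y‖ := by
  have hχ0 : χ 0 = 1 := by
    have hne : χ 0 ≠ 0 := norm_ne_zero_iff.mp (by simp [hχu])
    exact (mul_eq_left₀ hne).mp (by rw [← hχm, add_zero])
  rw [← one_mul ‖1 - χ y‖, ← hχu (-y), ← norm_mul, mul_sub, mul_one, ← hχm, neg_add_cancel, hχ0]

theorem IsVanHove.tendsto_toReal_measure_vhBoundary_div {G : Type*} [AddGroup G]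
    [TopologicalSpace G] [MeasurableSpace G] {θ : Measure G} {A : ℕ → Set G} (hA : IsVanHove θ A)
    {K : Set G} (hK : IsCompact K) :
    Tendsto (fun n ↦ (θ (vhBoundary K (A n))).toReal / (θ (A n)).toReal) atTop (𝓝 0) := by
  simpa [Function.comp_def, ENNReal.toReal_div] using
    (ENNReal.tendsto_toReal ENNReal.zero_ne_top).comp (hA.2.2.2 K hK)

theorem character_average_estimate_vanHove_general
    {G : Type*} [AddCommGroup G] [TopologicalSpace G] [IsTopologicalAddGroup G]
    [MeasurableSpace G] [BorelSpace G]
    (θ : Measure G) [θ.IsAddHaarMeasure]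
    (χ : G → ℂ) (hχc : Continuous χ) (hχm : ∀ x y, χ (x + y) = χ x * χ y)
    (hχu : ∀ x, ‖χ x‖ = 1)
    (y : G)
    (A : ℕ → Set G) (hA : IsVanHove θ A) :
    (∀ n, ‖(∫ x in (-y) +ᵥ A n, χ x ∂θ) - ∫ x in A n, χ x ∂θ‖ ≤
        (θ (vhBoundary {-y} (A n))).toReal) ∧
      Tendsto
        (fun n => ‖1 - χ y‖ * ‖((θ (A n)).toReal)⁻¹ • ∫ x in A n, χ x ∂θ‖) atTop
        (nhds 0) := by
  have hdiff (n : ℕ) : ‖(∫ x in (-y) +ᵥ A n, χ x ∂θ) - ∫ x in A n, χ x ∂θ‖ ≤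
      (θ (vhBoundary {-y} (A n))).toReal := by
    simpa using norm_setIntegral_vadd_sub_setIntegral_le θ hχc (fun x ↦ (hχu x).le) (-y) (hA.1 n)
  have hbound (n : ℕ) : ‖1 - χ y‖ * ‖∫ x in A n, χ x ∂θ‖ ≤ (θ (vhBoundary {-y} (A n))).toReal := by
    have h := hdiff n
    simp only [setIntegral_vadd, hχm, integral_const_mul] at h
    rwa [← sub_one_mul, norm_mul, norm_map_neg_sub_one hχm hχu] at h
  refine ⟨hdiff, squeeze_zero (fun n ↦ by positivity) (fun n ↦ ?_)
    (hA.tendsto_toReal_measure_vhBoundary_div (isCompact_singleton (x := -y)))⟩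
  rw [norm_smul, norm_inv, Real.norm_of_nonneg ENNReal.toReal_nonneg, mul_left_comm,
    ← div_eq_inv_mul]
  exact div_le_div_of_nonneg_right (hbound n) ENNReal.toReal_nonneg

/-- For a nontrivial character `χ` with `χ y ≠ 1` and a van Hove
sequence `(A n)`, the integral of `χ` over `(-y) + A n` differs from that over `A n`
by at most `θ (∂^{{-y}} A n)`, and consequently the normalised character averages,
multiplied by `|1 - χ y|`, tend to `0`. -/
theorem character_average_estimate_vanHove
    {G : Type*} [AddCommGroup G] [TopologicalSpace G] [IsTopologicalAddGroup G]
    [LocallyCompactSpace G] [SigmaCompactSpace G] [MeasurableSpace G] [BorelSpace G]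
    (θ : Measure G) [θ.IsAddHaarMeasure]
    (χ : G → ℂ) (hχc : Continuous χ) (hχm : ∀ x y, χ (x + y) = χ x * χ y)
    (hχu : ∀ x, ‖χ x‖ = 1)
    (y : G) (hy : χ y ≠ 1)
    (A : ℕ → Set G) (hA : IsVanHove θ A) :
    (∀ n, ‖(∫ x in (-y) +ᵥ A n, χ x ∂θ) - ∫ x in A n, χ x ∂θ‖ ≤
        (θ (vhBoundary {-y} (A n))).toReal) ∧
      Tendsto
        (fun n => ‖1 - χ y‖ * ‖((θ (A n)).toReal)⁻¹ • ∫ x in A n, χ x ∂θ‖) atTop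
        (nhds 0) :=
  character_average_estimate_vanHove_general θ χ hχc hχm hχu y A hA
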